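/- Let (X, Σ, μ) be a σ-finite measure space, 1 ≤ p ≤ ∞, and h ∈ L^∞(μ). Let M_h : L^p(μ) → L^p(μ) be the multiplication operator M_h(f) = h·f, which is a bounded linear operator. Then M_h is a topological divisor of zero in the Banach algebra B(L^p(μ)) of bounded linear operators on L^p(μ) if and only if h is a topological divisor of zero in L^∞(μ). -/

import Mathlib

open MeasureTheory Filter ENNReal

/-- `x` is a topological divisor of zero in a normed ring: there is a sequence of
norm-one elements whose products with `x` (on one side) tend to zero in norm. -/
def IsTDZ {A : Type*} [NormedRing A] (x : A) : Prop :=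
  ∃ y : ℕ → A, (∀ n, ‖y n‖ = 1) ∧
    (Tendsto (fun n => ‖x * y n‖) atTop (nhds 0) ∨
      Tendsto (fun n => ‖y n * x‖) atTop (nhds 0))

/-- `h` is a topological divisor of zero in the (commutative) Banach algebra `L^∞(μ)`. -/
def IsTDZLinfty {X : Type*} [MeasurableSpace X] (μ : Measure X) (h : Lp ℂ ⊤ μ) : Prop :=
  ∃ g : ℕ → Lp ℂ ⊤ μ, (∀ n, ‖g n‖ = 1) ∧
    (Tendsto (fun n => (eLpNorm (⇑h * ⇑(g n) : X → ℂ) ⊤ μ).toReal) atTop (nhds 0) ∨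
      Tendsto (fun n => (eLpNorm (⇑(g n) * ⇑h : X → ℂ) ⊤ μ).toReal) atTop (nhds 0))

/-! If `‖h‖ ≥ ε` almost everywhere, then `M_h` is invertible with inverse `M_{1/h}`, and a unit is
never a topological divisor of zero. Hence every set `{‖h‖ < 1/(n+1)}` has positive measure, and
its indicators witness that `h` is a topological divisor of zero in `L^∞`. Conversely, if
`‖h gₙ‖_∞ → 0` with `‖gₙ‖_∞ = 1`, then `‖M_h M_{gₙ}‖ ≤ ‖h gₙ‖_∞ → 0`, while `‖M_{gₙ}‖ = 1`
because `g ↦ M_g` is isometric: σ-finiteness provides sets of finite positive measure on which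
`‖g‖` is close to its essential supremum, and their indicators are test functions in `L^p`. -/

theorem IsUnit.not_isTDZ {A : Type*} [NormedRing A] {u : A} (hu : IsUnit u) : ¬IsTDZ u := by
  obtain ⟨u, rfl⟩ := hu
  rintro ⟨y, hy, hleft | hright⟩
  · have hbound (n : ℕ) : 1 ≤ ‖(↑u⁻¹ : A)‖ * ‖↑u * y n‖ := calc
      1 = ‖(↑u⁻¹ : A) * (↑u * y n)‖ := by rw [Units.inv_mul_cancel_left, hy]
      _ ≤ _ := norm_mul_le _ _
    exact zero_lt_one.not_ge (ge_of_tendsto' (by simpa using hleft.const_mul ‖(↑u⁻¹ : A)‖) hbound)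
  · have hbound (n : ℕ) : 1 ≤ ‖y n * ↑u‖ * ‖(↑u⁻¹ : A)‖ := calc
      1 = ‖y n * ↑u * (↑u⁻¹ : A)‖ := by rw [Units.mul_inv_cancel_right, hy]
      _ ≤ _ := norm_mul_le _ _
    exact zero_lt_one.not_ge (ge_of_tendsto' (by simpa using hright.mul_const ‖(↑u⁻¹ : A)‖) hbound)

section MultiplicationOperator

variable {X : Type*} [MeasurableSpace X] {μ : Measure X}

theorem toReal_eLpNorm_top_le_of_ae_bound {E : Type*} [NormedAddCommGroup E] {f : X → E} {C : ℝ}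
    (hC : 0 ≤ C) (hf : ∀ᵐ x ∂μ, ‖f x‖ ≤ C) : (eLpNorm f ∞ μ).toReal ≤ C :=
  toReal_le_of_le_ofReal hC (by simpa using eLpNorm_le_of_ae_bound (p := ∞) hf)

theorem measure_lt_norm_ne_zero {E : Type*} [NormedAddCommGroup E] (g : Lp E ∞ μ) {c : ℝ}
    (hc0 : 0 ≤ c) (hc : c < ‖g‖) : μ {x | c < ‖g x‖} ≠ 0 := by
  intro h0
  refine hc.not_ge (Lp.norm_def g ▸ toReal_eLpNorm_top_le_of_ae_bound hc0 ?_)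
  rw [ae_iff]
  simpa using h0

variable {𝕜 : Type*} [NontriviallyNormedField 𝕜] {p : ℝ≥0∞} [Fact (1 ≤ p)]

variable (p) in
noncomputable def mulOp (g : Lp 𝕜 ∞ μ) : Lp 𝕜 p μ →L[𝕜] Lp 𝕜 p μ :=
  (ContinuousLinearMap.mul 𝕜 𝕜).holderL μ ∞ p p g

theorem coeFn_mulOp (g : Lp 𝕜 ∞ μ) (f : Lp 𝕜 p μ) : mulOp p g f =ᵐ[μ] ⇑g * ⇑f :=
  (ContinuousLinearMap.mul 𝕜 𝕜).coeFn_holder g f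

theorem eq_mulOp_of_coeFn_eq {M : Lp 𝕜 p μ →L[𝕜] Lp 𝕜 p μ} {g : Lp 𝕜 ∞ μ}
    (hM : ∀ f, M f =ᵐ[μ] ⇑g * ⇑f) : M = mulOp p g :=
  ContinuousLinearMap.ext fun f => Lp.ext <| (hM f).trans (coeFn_mulOp g f).symm

theorem norm_mulOp_le (g : Lp 𝕜 ∞ μ) : ‖mulOp p g‖ ≤ ‖g‖ := by
  have hB : ‖(ContinuousLinearMap.mul 𝕜 𝕜).holderL μ ∞ p p‖ ≤ 1 :=
    (ContinuousLinearMap.norm_holderL_le _).trans (ContinuousLinearMap.opNorm_mul_le 𝕜 𝕜)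
  exact (ContinuousLinearMap.le_opNorm _ g).trans (mul_le_of_le_one_left (norm_nonneg g) hB)

theorem norm_mulOp_mul_mulOp_le (g₁ g₂ : Lp 𝕜 ∞ μ) :
    ‖mulOp p g₁ * mulOp p g₂‖ ≤ (eLpNorm (⇑g₁ * ⇑g₂) ∞ μ).toReal := by
  refine ContinuousLinearMap.opNorm_le_bound _ toReal_nonneg fun f => ?_
  have hcoe : (mulOp p g₁ * mulOp p g₂) f =ᵐ[μ] (⇑g₁ * ⇑g₂) • ⇑f := by
    filter_upwards [coeFn_mulOp g₁ (mulOp p g₂ f), coeFn_mulOp g₂ f] with x h₁ h₂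
    simp [h₁, h₂, mul_assoc]
  have hfin : eLpNorm (⇑g₁ * ⇑g₂) ∞ μ ≠ ∞ := ((Lp.memLp g₂).mul (Lp.memLp g₁)).eLpNorm_ne_top
  rw [Lp.norm_def, eLpNorm_congr_ae hcoe, Lp.norm_def, ← toReal_mul]
  exact toReal_mono (mul_ne_top hfin (Lp.eLpNorm_ne_top f))
    (eLpNorm_smul_le_mul_eLpNorm (Lp.aestronglyMeasurable f)
      ((Lp.aestronglyMeasurable g₁).mul (Lp.aestronglyMeasurable g₂)))

theorem le_norm_mulOp_of_lt_norm [SigmaFinite μ] (g : Lp 𝕜 ∞ μ) {c : ℝ} (hc0 : 0 < c)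
    (hc : c < ‖g‖) : c ≤ ‖mulOp p g‖ := by
  have hS : MeasurableSet {x | c < ‖g x‖} :=
    measurableSet_lt measurable_const (Lp.stronglyMeasurable g).norm.measurable
  obtain ⟨t, ht, hts, ht0, htfin⟩ := Measure.exists_subset_measure_lt_top hS
    (pos_iff_ne_zero.2 (measure_lt_norm_ne_zero g hc0.le hc))
  set f : Lp 𝕜 p μ := indicatorConstLp p ht htfin.ne 1
  have hp0 : p ≠ 0 := (zero_lt_one.trans_le Fact.out).ne'
  have hf : 0 < ‖f‖ := by
    rw [norm_indicatorConstLp' hp0 ht0.ne', norm_one, one_mul]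
    exact Real.rpow_pos_of_pos (toReal_pos ht0.ne' htfin.ne) _
  have hgf : c * ‖f‖ ≤ ‖mulOp p g f‖ := by
    refine (le_inv_mul_iff₀ hc0).1 (Lp.norm_le_mul_norm_of_ae_le_mul ?_)
    filter_upwards [indicatorConstLp_coeFn (p := p) (hs := ht) (hμs := htfin.ne) (c := (1 : 𝕜)),
      coeFn_mulOp g f] with x hfx hgfx
    rw [hgfx, Pi.mul_apply, norm_mul, hfx]
    by_cases hx : x ∈ t
    · simpa [hx, ← div_eq_inv_mul, one_le_div hc0] using (hts hx : c < ‖g x‖).le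
    · simp [hx]
  exact le_of_mul_le_mul_right (hgf.trans ((mulOp p g).le_opNorm f)) hf

theorem norm_mulOp [SigmaFinite μ] (g : Lp 𝕜 ∞ μ) : ‖mulOp p g‖ = ‖g‖ := by
  refine le_antisymm (norm_mulOp_le g) (le_of_forall_lt_imp_le_of_dense fun c hc => ?_)
  rcases le_or_gt c 0 with hc0 | hc0
  · exact hc0.trans (norm_nonneg _)
  · exact le_norm_mulOp_of_lt_norm g hc0 hc

theorem mulOp_mul_mulOp_eq_one {g k : Lp 𝕜 ∞ μ} (hgk : ∀ᵐ x ∂μ, g x * k x = 1) :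
    mulOp p g * mulOp p k = 1 := by
  refine ContinuousLinearMap.ext fun f => Lp.ext ?_
  filter_upwards [coeFn_mulOp g (mulOp p k f), coeFn_mulOp k f, hgk] with x h₁ h₂ hx
  simp [h₁, h₂, ← mul_assoc, hx]

theorem isUnit_mulOp_of_le_norm {g : Lp 𝕜 ∞ μ} {ε : ℝ} (hε : 0 < ε)
    (hg : ∀ᵐ x ∂μ, ε ≤ ‖g x‖) : IsUnit (mulOp p g) := by
  have hinv : MemLp (fun x => (g x)⁻¹) ∞ μ :=
    memLp_top_of_bound (Lp.aestronglyMeasurable g).inv₀ ε⁻¹ <| by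
      filter_upwards [hg] with x hx
      rw [norm_inv]
      exact inv_anti₀ hε hx
  have hg0 : ∀ᵐ x ∂μ, g x ≠ 0 := hg.mono fun x hx h0 => by
    rw [h0, norm_zero] at hx
    linarith
  refine ⟨⟨mulOp p g, mulOp p (hinv.toLp _), ?_, ?_⟩, rfl⟩ <;>
    refine mulOp_mul_mulOp_eq_one ?_ <;>
    filter_upwards [hinv.coeFn_toLp, hg0] with x hx hx0 <;>
    simp [hx, hx0]

theorem measure_norm_lt_ne_zero_of_isTDZ {g : Lp 𝕜 ∞ μ} (hg : IsTDZ (mulOp p g)) {ε : ℝ}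
    (hε : 0 < ε) : μ {x | ‖g x‖ < ε} ≠ 0 := by
  intro h0
  refine (isUnit_mulOp_of_le_norm hε ?_).not_isTDZ hg
  rw [ae_iff]
  simpa using h0

theorem isTDZLinfty_of_measure_norm_lt_ne_zero {h : Lp ℂ ∞ μ}
    (hh : ∀ ε > 0, μ {x | ‖h x‖ < ε} ≠ 0) : IsTDZLinfty μ h := by
  set E : ℕ → Set X := fun n => {x | ‖h x‖ < 1 / (n + 1)}
  have hE (n : ℕ) : MeasurableSet (E n) :=
    measurableSet_lt (Lp.stronglyMeasurable h).norm.measurable measurable_const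
  have hmem (n : ℕ) : MemLp ((E n).indicator fun _ => (1 : ℂ)) ∞ μ :=
    (memLp_top_const 1).indicator (hE n)
  refine ⟨fun n => (hmem n).toLp _, fun n => ?_, Or.inl ?_⟩
  · rw [Lp.norm_toLp, eLpNorm_indicator_const' (hE n) (hh _ Nat.one_div_pos_of_nat) top_ne_zero]
    simp
  · refine squeeze_zero (fun n => toReal_nonneg) (fun n => ?_)
      tendsto_one_div_add_atTop_nhds_zero_nat
    refine toReal_eLpNorm_top_le_of_ae_bound Nat.one_div_pos_of_nat.le ?_
    filter_upwards [(hmem n).coeFn_toLp] with x hx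
    rw [Pi.mul_apply, hx]
    by_cases hxE : x ∈ E n
    · rw [Set.indicator_of_mem hxE, mul_one]
      exact le_of_lt hxE
    · rw [Set.indicator_of_notMem hxE, mul_zero, norm_zero]
      positivity

theorem isTDZ_mulOp_of_isTDZLinfty [SigmaFinite μ] {h : Lp ℂ ∞ μ} (hh : IsTDZLinfty μ h) :
    IsTDZ (mulOp p h) := by
  obtain ⟨g, hg, hleft | hright⟩ := hh <;>
    refine ⟨fun n => mulOp p (g n), fun n => (norm_mulOp (g n)).trans (hg n), Or.inl ?_⟩
  · exact squeeze_zero (fun n => norm_nonneg _) (fun n => norm_mulOp_mul_mulOp_le h (g n)) hleft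
  · refine squeeze_zero (fun n => norm_nonneg _) (fun n => ?_) hright
    exact mul_comm (⇑(g n)) ⇑h ▸ norm_mulOp_mul_mulOp_le h (g n)

end MultiplicationOperator

/-- For `h ∈ L^∞(μ)` over a σ-finite measure space and `1 ≤ p ≤ ∞`, the multiplication
operator `M_h : L^p(μ) → L^p(μ)`, `M_h f = h·f`, is a topological divisor of zero in the
Banach algebra `B(L^p(μ))` if and only if `h` is a topological divisor of zero in `L^∞(μ)`. -/
theorem multiplication_op_tdz_iff {X : Type*} [MeasurableSpace X] (μ : Measure X)
    [SigmaFinite μ] (p : ℝ≥0∞) [Fact (1 ≤ p)] (h : Lp ℂ ⊤ μ)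
    (M : Lp ℂ p μ →L[ℂ] Lp ℂ p μ)
    (hM : ∀ f : Lp ℂ p μ, (⇑(M f) : X → ℂ) =ᵐ[μ] ⇑h * ⇑f) :
    IsTDZ M ↔ IsTDZLinfty μ h := by
  obtain rfl := eq_mulOp_of_coeFn_eq hM
  exact ⟨fun hT => isTDZLinfty_of_measure_norm_lt_ne_zero fun _ =>
    measure_norm_lt_ne_zero_of_isTDZ hT, isTDZ_mulOp_of_isTDZLinfty⟩
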